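/- Lemma 5.6 (smqi-stop-S), budget-parametrized form: with the almost-prefix sets S_d defined from nonnegative costs c : Fin n → ℝ as in the context, let ℓ : Fin n → ℝ be nondecreasing (ℓ_0 ≤ ℓ_1 ≤ ⋯ ≤ ℓ_{n−1}), let r : Fin n → ℝ and δ ∈ ℝ, and for h ∈ Fin n define P_h := {j ∈ Fin n : j ≠ h and ℓ_j < r_h − δ}. If d ≥ 0 and c(P_h) ≤ d, then P_h ⊆ S_d. (The paper applies this with d = y^i.) -/
import Mathlib


open Finset

/-- The least `d`-big index (an index `j` with cost `c j > d`), with the convention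
that it equals `n` if no `d`-big index exists. -/
noncomputable def aIdx (n : ℕ) (c : Fin n → ℝ) (d : ℝ) : ℕ :=
  sInf ({j : ℕ | ∃ hj : j < n, d < c ⟨j, hj⟩} ∪ {n})

/-- The second least `d`-big index, with the convention that it equals `n` if
fewer than two `d`-big indices exist. -/
noncomputable def bIdx (n : ℕ) (c : Fin n → ℝ) (d : ℝ) : ℕ :=
  sInf ({j : ℕ | (∃ hj : j < n, d < c ⟨j, hj⟩) ∧ aIdx n c d < j} ∪ {n})

/-- `A_d`: the maximal prefix containing no `d`-big index, i.e. `{j : j < a_d}`. -/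
noncomputable def Aset (n : ℕ) (c : Fin n → ℝ) (d : ℝ) : Finset (Fin n) :=
  Finset.univ.filter fun j => (j : ℕ) < aIdx n c d

/-- `B_d`: the segment strictly between the first and second `d`-big indices. -/
noncomputable def Bset (n : ℕ) (c : Fin n → ℝ) (d : ℝ) : Finset (Fin n) :=
  Finset.univ.filter fun j => aIdx n c d < (j : ℕ) ∧ (j : ℕ) < bIdx n c d

open Classical in
/-- The largest subset of `E` that is downward closed within `E` (in the index order)
and has cost at most `bound`.  Since such sets form a chain, their union (here: `sup`)
is the largest one. -/
noncomputable def maxPrefixIn {n : ℕ} (E : Finset (Fin n)) (c : Fin n → ℝ) (bound : ℝ) :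
    Finset (Fin n) :=
  (E.powerset.filter fun S =>
    (∀ j ∈ S, ∀ i ∈ E, i ≤ j → i ∈ S) ∧ ∑ j ∈ S, c j ≤ bound).sup id

/-- The almost-prefix set `S_d`: if `c(A_d) > d`, the largest prefix contained in `A_d`
of cost at most `2d`; otherwise, the largest subset of `A_d ∪ B_d` that is downward
closed within `A_d ∪ B_d` and has cost at most `d`. -/
noncomputable def Sset (n : ℕ) (c : Fin n → ℝ) (d : ℝ) : Finset (Fin n) :=
  if d < ∑ j ∈ Aset n c d, c j then maxPrefixIn (Aset n c d) c (2 * d)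
  else maxPrefixIn (Aset n c d ∪ Bset n c d) c d

open Classical in
lemma subset_maxPrefixIn {n : ℕ} {E S : Finset (Fin n)} {c : Fin n → ℝ} {bound : ℝ}
    (hSE : S ⊆ E) (hdc : ∀ j ∈ S, ∀ i ∈ E, i ≤ j → i ∈ S)
    (hsum : ∑ j ∈ S, c j ≤ bound) : S ⊆ maxPrefixIn E c bound :=
  Finset.le_sup (f := id)
    (Finset.mem_filter.mpr ⟨Finset.mem_powerset.mpr hSE, hdc, hsum⟩)

open Classical in
/-- **Lemma 5.6 (smqi-stop-S), budget-parametrized form.**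
With nonnegative costs `c`, nondecreasing left endpoints `ℓ`, right endpoints `r`
and precision `δ`, let `P_h := {j : j ≠ h ∧ ℓ j < r h − δ}` be the almost-prefix set
of a candidate `δ`-minimizer `h`.  If `d ≥ 0` and `c(P_h) ≤ d`, then `P_h ⊆ S_d`. -/
theorem smqi_stop_subset_Sset (n : ℕ) (c : Fin n → ℝ) (hc : ∀ j, 0 ≤ c j)
    (ℓ : Fin n → ℝ) (hℓ : Monotone ℓ) (r : Fin n → ℝ) (δ : ℝ)
    (h : Fin n) (d : ℝ) (hd : 0 ≤ d)
    (hcost : ∑ j ∈ Finset.univ.filter (fun j => j ≠ h ∧ ℓ j < r h - δ), c j ≤ d) :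
    Finset.univ.filter (fun j => j ≠ h ∧ ℓ j < r h - δ) ⊆ Sset n c d := by
  classical
  set a := aIdx n c d with ha_def
  set b := bIdx n c d with hb_def
  set P := Finset.univ.filter (fun j => j ≠ h ∧ ℓ j < r h - δ) with hP_def
  set Q := Finset.univ.filter (fun j : Fin n => ℓ j < r h - δ) with hQ_def
  have hmemP : ∀ j : Fin n, j ∈ P ↔ (j ≠ h ∧ ℓ j < r h - δ) := by
    intro j; simp [hP_def]
  have hmemQ : ∀ j : Fin n, j ∈ Q ↔ ℓ j < r h - δ := by
    intro j; simp [hQ_def]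
  have hPQ : P ⊆ Q := by
    intro j hj; exact (hmemQ j).mpr ((hmemP j).mp hj).2
  have hQpre : ∀ j ∈ Q, ∀ i : Fin n, i ≤ j → i ∈ Q := by
    intro j hj i hij
    exact (hmemQ i).mpr (lt_of_le_of_lt (hℓ hij) ((hmemQ j).mp hj))
  have hPd : ∀ j ∈ P, c j ≤ d := fun j hj =>
    le_trans (Finset.single_le_sum (fun i _ => hc i) hj) hcost
  have hPnotbig : ∀ j ∈ P, ¬ d < c j := fun j hj => not_lt.mpr (hPd j hj)
  -- facts about aIdx
  have haU : a ∈ ({j : ℕ | ∃ hj : j < n, d < c ⟨j, hj⟩} ∪ {n} : Set ℕ) :=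
    Nat.sInf_mem ⟨n, Or.inr rfl⟩
  have ha_big : ∀ hA : a < n, d < c ⟨a, hA⟩ := by
    intro hA
    rcases haU with ⟨hj, hb⟩ | hn
    · exact hb
    · exact absurd (Set.mem_singleton_iff.mp hn) (Nat.ne_of_lt hA)
  have hbU : b ∈ ({j : ℕ | (∃ hj : j < n, d < c ⟨j, hj⟩) ∧ a < j} ∪ {n} : Set ℕ) :=
    Nat.sInf_mem ⟨n, Or.inr rfl⟩
  have hmemA : ∀ j : Fin n, j ∈ Aset n c d ↔ (j : ℕ) < a := by
    intro j; simp [Aset, ha_def]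
  have hmemB : ∀ j : Fin n, j ∈ Bset n c d ↔ a < (j : ℕ) ∧ (j : ℕ) < b := by
    intro j; simp [Bset, ha_def, hb_def]
  -- Key: if some element of Q is at position ≥ a, then the index a itself is h.
  have key : ∀ j ∈ Q, a ≤ (j : ℕ) → ∃ hA : a < n, (⟨a, hA⟩ : Fin n) = h ∧ h ∈ Q := by
    intro j hj haj
    have hA : a < n := lt_of_le_of_lt haj j.isLt
    have hin : (⟨a, hA⟩ : Fin n) ∈ Q := hQpre j hj _ (by simp [Fin.le_def]; exact haj)
    have hbig := ha_big hA
    have hne : (⟨a, hA⟩ : Fin n) = h := by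
      by_contra hne
      exact hPnotbig _ ((hmemP _).mpr ⟨hne, (hmemQ _).mp hin⟩) hbig
    exact ⟨hA, hne, hne ▸ hin⟩
  -- h is not d-big whenever h ∈ A ∪ B
  have hAB_notbig : ∀ i : Fin n, i ∈ Aset n c d ∪ Bset n c d → ¬ d < c i := by
    intro i hi hbig
    have hle : a ≤ (i : ℕ) := Nat.sInf_le (Or.inl ⟨i.isLt, by simpa using hbig⟩)
    rcases Finset.mem_union.mp hi with hi | hi
    · exact absurd ((hmemA i).mp hi) (not_lt.mpr hle)
    · obtain ⟨hai, hib⟩ := (hmemB i).mp hi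
      have : b ≤ (i : ℕ) := Nat.sInf_le (Or.inl ⟨⟨i.isLt, by simpa using hbig⟩, hai⟩)
      omega
  unfold Sset
  by_cases hcase : d < ∑ j ∈ Aset n c d, c j
  · rw [if_pos hcase]
    -- Case 1: P ⊆ A
    have hPA : P ⊆ Aset n c d := by
      intro j hj
      refine (hmemA j).mpr ?_
      by_contra hle
      push_neg at hle
      obtain ⟨hA, hah, hhQ⟩ := key j (hPQ hj) hle
      have hha : (h : ℕ) = a := by rw [← hah]
      have hAP : Aset n c d ⊆ P := by
        intro i hi
        have hia : (i : ℕ) < a := (hmemA i).mp hi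
        have hih : i ≤ h := by rw [Fin.le_def]; omega
        refine (hmemP i).mpr ⟨?_, (hmemQ i).mp (hQpre h hhQ i hih)⟩
        intro hih'; rw [hih'] at hia; omega
      have : ∑ j ∈ Aset n c d, c j ≤ ∑ j ∈ P, c j :=
        Finset.sum_le_sum_of_subset_of_nonneg hAP (fun i _ _ => hc i)
      linarith
    -- Candidate set: Q ∩ A
    refine Finset.Subset.trans ?_ (subset_maxPrefixIn (S := Q ∩ Aset n c d)
      Finset.inter_subset_right ?_ ?_)
    · intro j hj
      exact Finset.mem_inter.mpr ⟨hPQ hj, hPA hj⟩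
    · intro j hj i hi hij
      exact Finset.mem_inter.mpr ⟨hQpre j (Finset.mem_inter.mp hj).1 i hij, hi⟩
    · by_cases hh : h ∈ Q ∩ Aset n c d
      · have hch : c h ≤ d := by
          have := hAB_notbig h (Finset.mem_union_left _ (Finset.mem_inter.mp hh).2)
          linarith [not_lt.mp this]
        have hsub : (Q ∩ Aset n c d).erase h ⊆ P := by
          intro j hj
          obtain ⟨hjh, hjQ⟩ := Finset.mem_erase.mp hj
          exact (hmemP j).mpr ⟨hjh, (hmemQ j).mp (Finset.mem_inter.mp hjQ).1⟩
        have h1 : ∑ j ∈ (Q ∩ Aset n c d).erase h, c j ≤ ∑ j ∈ P, c j :=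
          Finset.sum_le_sum_of_subset_of_nonneg hsub (fun i _ _ => hc i)
        have h2 := Finset.sum_erase_add (Q ∩ Aset n c d) c hh
        linarith
      · have hsub : Q ∩ Aset n c d ⊆ P := by
          intro j hj
          refine (hmemP j).mpr ⟨?_, (hmemQ j).mp (Finset.mem_inter.mp hj).1⟩
          intro hjh; rw [hjh] at hj; exact hh hj
        have := Finset.sum_le_sum_of_subset_of_nonneg hsub (fun i _ _ => hc i)
        linarith
  · rw [if_neg hcase]
    push_neg at hcase
    -- Case 2: P ⊆ A ∪ B
    have hPAB : P ⊆ Aset n c d ∪ Bset n c d := by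
      intro j hj
      by_cases hja : (j : ℕ) < a
      · exact Finset.mem_union_left _ ((hmemA j).mpr hja)
      · push_neg at hja
        obtain ⟨hA, hah, hhQ⟩ := key j (hPQ hj) hja
        have hha : (h : ℕ) = a := by rw [← hah]
        have hjh : j ≠ h := ((hmemP j).mp hj).1
        have haj : a < (j : ℕ) := by
          rcases lt_or_eq_of_le hja with h' | h'
          · exact h'
          · exact absurd (Fin.ext (by omega : (j : ℕ) = (h : ℕ))) hjh
        refine Finset.mem_union_right _ ((hmemB j).mpr ⟨haj, ?_⟩)
        by_contra hjb
        push_neg at hjb  -- b ≤ j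
        have hbn : b < n := lt_of_le_of_lt hjb j.isLt
        have hbbig : d < c ⟨b, hbn⟩ ∧ a < b := by
          rcases hbU with ⟨⟨h1, h2⟩, h3⟩ | hn
          · exact ⟨h2, h3⟩
          · exact absurd (Set.mem_singleton_iff.mp hn) (Nat.ne_of_lt hbn)
        have hinQ : (⟨b, hbn⟩ : Fin n) ∈ Q :=
          hQpre j (hPQ hj) _ (by simp [Fin.le_def]; exact hjb)
        have hne : (⟨b, hbn⟩ : Fin n) ≠ h := by
          intro he
          have : (h : ℕ) = b := by rw [← he]
          omega
        exact hPnotbig _ ((hmemP _).mpr ⟨hne, (hmemQ _).mp hinQ⟩) hbbig.1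
    -- Candidate set: Q ∩ (A ∪ B)
    refine Finset.Subset.trans ?_ (subset_maxPrefixIn
      (S := Q ∩ (Aset n c d ∪ Bset n c d)) Finset.inter_subset_right ?_ ?_)
    · intro j hj
      exact Finset.mem_inter.mpr ⟨hPQ hj, hPAB hj⟩
    · intro j hj i hi hij
      exact Finset.mem_inter.mpr ⟨hQpre j (Finset.mem_inter.mp hj).1 i hij, hi⟩
    · by_cases hh : h ∈ Q ∩ (Aset n c d ∪ Bset n c d)
      · -- h not d-big, so Q has no d-big element, so Q ∩ (A∪B) ⊆ A
        have hsubA : Q ∩ (Aset n c d ∪ Bset n c d) ⊆ Aset n c d := by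
          intro j hj
          refine (hmemA j).mpr ?_
          by_contra hle
          push_neg at hle
          obtain ⟨hA, hah, _⟩ := key j (Finset.mem_inter.mp hj).1 hle
          have hha : (h : ℕ) = a := by rw [← hah]
          rcases Finset.mem_union.mp (Finset.mem_inter.mp hh).2 with hi | hi
          · have := (hmemA h).mp hi; omega
          · have := ((hmemB h).mp hi).1; omega
        have := Finset.sum_le_sum_of_subset_of_nonneg hsubA (fun i _ _ => hc i)
        linarith
      · have hsub : Q ∩ (Aset n c d ∪ Bset n c d) ⊆ P := by
          intro j hj
          refine (hmemP j).mpr ⟨?_, (hmemQ j).mp (Finset.mem_inter.mp hj).1⟩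
          intro hjh; rw [hjh] at hj; exact hh hj
        have := Finset.sum_le_sum_of_subset_of_nonneg hsub (fun i _ _ => hc i)
        linarith
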